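/- Let d ≥ 1 and let S be a Hermiticity-preserving linear map from d×d complex matrices to m×m complex matrices. Then ‖S‖_ME ≤ ‖S‖_⋄ ≤ d·‖S‖_ME. -/

import Mathlib

open Matrix Kronecker ComplexOrder

noncomputable section

/-- The positive semidefinite square root of a PSD matrix, as `Matrix.PosSemidef.sqrt`
was defined in the older Mathlib (since removed). -/
noncomputable def posSemidefSqrt {n : Type*} [Fintype n] [DecidableEq n] {A : Matrix n n ℂ}
    (hA : A.PosSemidef) : Matrix n n ℂ :=
  (hA.1.eigenvectorUnitary : Matrix n n ℂ) * diagonal ((↑) ∘ (√·) ∘ hA.1.eigenvalues) *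
    (star (hA.1.eigenvectorUnitary : Matrix n n ℂ))

/-- The matrix absolute value `|A| = √(AᴴA)`. -/
noncomputable def matAbs {n : Type*} [Fintype n] [DecidableEq n] (A : Matrix n n ℂ) :
    Matrix n n ℂ :=
  posSemidefSqrt (Matrix.posSemidef_conjTranspose_mul_self A)

/-- The trace norm `‖A‖₁ = Tr √(AᴴA)`. -/
noncomputable def traceNorm {n : Type*} [Fintype n] [DecidableEq n] (A : Matrix n n ℂ) : ℝ :=
  ((matAbs A).trace).re

/-- The positive semidefinite square root of a PSD matrix (zero otherwise). -/
noncomputable def matSqrt {n : Type*} [Fintype n] [DecidableEq n] (σ : Matrix n n ℂ) :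
    Matrix n n ℂ :=
  open scoped Classical in
  if h : σ.PosSemidef then posSemidefSqrt h else 0

/-- A density matrix: positive semidefinite with unit trace. -/
def IsDensity {n : Type*} [Fintype n] [DecidableEq n] (σ : Matrix n n ℂ) : Prop :=
  σ.PosSemidef ∧ σ.trace = 1

/-- The Choi operator of a linear map between matrix algebras. -/
noncomputable def choi {d m : ℕ}
    (S : Matrix (Fin d) (Fin d) ℂ →ₗ[ℂ] Matrix (Fin m) (Fin m) ℂ) :
    Matrix (Fin m × Fin d) (Fin m × Fin d) ℂ :=
  ∑ i : Fin d, ∑ j : Fin d,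
    (S (Matrix.single i j 1)) ⊗ₖ (Matrix.single i j 1)

/-- The ME-norm `‖S‖_ME = ‖J(S)‖₁ / d`. -/
noncomputable def MENorm {d m : ℕ}
    (S : Matrix (Fin d) (Fin d) ℂ →ₗ[ℂ] Matrix (Fin m) (Fin m) ℂ) : ℝ :=
  traceNorm (choi S) / d

/-- The diamond norm: supremum over density matrices σ of
`‖(1 ⊗ √σ) J(S) (1 ⊗ √σ)‖₁`. -/
noncomputable def diamondNorm {d m : ℕ}
    (S : Matrix (Fin d) (Fin d) ℂ →ₗ[ℂ] Matrix (Fin m) (Fin m) ℂ) : ℝ :=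
  ⨆ σ : {σ : Matrix (Fin d) (Fin d) ℂ // IsDensity σ},
    traceNorm (((1 : Matrix (Fin m) (Fin m) ℂ) ⊗ₖ matSqrt σ.1) * choi S *
      ((1 : Matrix (Fin m) (Fin m) ℂ) ⊗ₖ matSqrt σ.1))

/-- The M-operator `M(S) = Tr_B |J(S)|`. -/
noncomputable def Mop {d m : ℕ}
    (S : Matrix (Fin d) (Fin d) ℂ →ₗ[ℂ] Matrix (Fin m) (Fin m) ℂ) :
    Matrix (Fin d) (Fin d) ℂ :=
  Matrix.of fun k l => ∑ b : Fin m, matAbs (choi S) (b, k) (b, l)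

/-- A quantum channel: completely positive (PSD Choi operator, by Choi's theorem)
and trace preserving. -/
def IsQChannel {d m : ℕ}
    (S : Matrix (Fin d) (Fin d) ℂ →ₗ[ℂ] Matrix (Fin m) (Fin m) ℂ) : Prop :=
  (choi S).PosSemidef ∧ ∀ ρ : Matrix (Fin d) (Fin d) ℂ, (S ρ).trace = ρ.trace

/-!
At the maximally mixed state `σ = 1/d` one has `(1 ⊗ √σ) J (1 ⊗ √σ) = J / d`, which gives the lower
bound. For the upper bound, `A = 1 ⊗ √σ` is a Hermitian contraction (`A² = 1 ⊗ σ ≤ 1`), and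
conjugating a Hermitian `X` by such an `A` does not increase its trace norm: if `U` is the sign of
`AXA`, then `‖AXA‖₁ = Re Tr (X · AUA)` with `-1 ≤ AUA ≤ 1`, and splitting `X = X⁺ - X⁻` bounds
this by `Tr X⁺ + Tr X⁻ = ‖X‖₁`. So every term of the supremum is at most `‖J‖₁ = d ‖S‖_ME`.
-/

open scoped MatrixOrder

namespace Matrix

variable {n : Type*} [Fintype n]

lemma re_trace_nonneg {P : Matrix n n ℂ} (hP : 0 ≤ P) : 0 ≤ P.trace.re :=
  (Complex.nonneg_iff.mp (nonneg_iff_posSemidef.mp hP).trace_nonneg).1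

variable [DecidableEq n]

lemma re_trace_mul_nonneg {P Q : Matrix n n ℂ} (hP : 0 ≤ P) (hQ : 0 ≤ Q) :
    0 ≤ (P * Q).trace.re := by
  have h := star_left_conjugate_nonneg hQ (CFC.sqrt P)
  rw [(CFC.sqrt_nonneg P).isSelfAdjoint.star_eq] at h
  simpa only [trace_mul_cycle, CFC.sqrt_mul_sqrt_self P] using re_trace_nonneg h

end Matrix

section

variable {n : Type*} [Fintype n] [DecidableEq n]

lemma posSemidefSqrt_eq_sqrt {A : Matrix n n ℂ} (hA : A.PosSemidef) :
    posSemidefSqrt hA = CFC.sqrt A := by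
  rw [CFC.sqrt_eq_real_sqrt A hA.nonneg, cfcₙ_eq_cfc, hA.1.cfc_eq]
  rfl

lemma matAbs_eq_abs (A : Matrix n n ℂ) : matAbs A = CFC.abs A :=
  posSemidefSqrt_eq_sqrt _

lemma matSqrt_eq_sqrt {σ : Matrix n n ℂ} (hσ : 0 ≤ σ) : matSqrt σ = CFC.sqrt σ := by
  rw [matSqrt, dif_pos (nonneg_iff_posSemidef.mp hσ), posSemidefSqrt_eq_sqrt]

lemma traceNorm_smul (r : NNReal) (X : Matrix n n ℂ) : traceNorm (r • X) = r * traceNorm X := by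
  rw [traceNorm, traceNorm, matAbs_eq_abs, matAbs_eq_abs, CFC.abs_smul_nonneg, trace_smul]
  simp [NNReal.smul_def]

lemma exists_traceNorm_eq_re_trace_mul {Y : Matrix n n ℂ} (hY : IsSelfAdjoint Y) :
    ∃ U : Matrix n n ℂ, U ≤ 1 ∧ -1 ≤ U ∧ traceNorm Y = (Y * U).trace.re := by
  have hcont := fun f : ℝ → ℝ => (Matrix.finite_real_spectrum (A := Y)).continuousOn f
  refine ⟨cfc (fun x : ℝ => if 0 ≤ x then 1 else -1) Y, cfc_le_one _ _ ?_, ?_, ?_⟩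
  · intro x _; split_ifs <;> norm_num
  · simpa using algebraMap_le_cfc _ (-1 : ℝ) Y (fun x _ => by split_ifs <;> norm_num) (hcont _)
  · rw [traceNorm, matAbs_eq_abs, CFC.abs_eq_cfc_norm Y]
    nth_rw 2 [← cfc_id' ℝ Y]
    rw [← cfc_mul _ _ Y (hcont _) (hcont _)]
    refine congrArg (fun M : Matrix n n ℂ => M.trace.re) (cfc_congr fun x _ => ?_)
    split_ifs with h
    · simp [abs_of_nonneg h]
    · simp [abs_of_neg (not_le.mp h)]

lemma re_trace_mul_le_traceNorm {X T : Matrix n n ℂ} (hX : IsSelfAdjoint X) (hT : T ≤ 1)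
    (hT' : -1 ≤ T) : (X * T).trace.re ≤ traceNorm X := by
  have hsplit : CFC.abs X - X * T = X⁺ * (1 - T) + X⁻ * (1 + T) :=
    calc CFC.abs X - X * T = (X⁺ + X⁻) - (X⁺ - X⁻) * T := by
          rw [CFC.posPart_add_negPart X, CFC.posPart_sub_negPart X]
      _ = X⁺ * (1 - T) + X⁻ * (1 + T) := by noncomm_ring
  have hnonneg : 0 ≤ (CFC.abs X - X * T).trace.re := by
    rw [hsplit, trace_add, Complex.add_re]
    refine add_nonneg (re_trace_mul_nonneg (CFC.posPart_nonneg X) (sub_nonneg.mpr hT))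
      (re_trace_mul_nonneg (CFC.negPart_nonneg X) ?_)
    simpa [add_comm] using sub_nonneg.mpr hT'
  rw [trace_sub, Complex.sub_re, sub_nonneg] at hnonneg
  rwa [traceNorm, matAbs_eq_abs]

lemma traceNorm_mul_mul_le {X A : Matrix n n ℂ} (hX : IsSelfAdjoint X) (hA : IsSelfAdjoint A)
    (hA1 : A * A ≤ 1) : traceNorm (A * X * A) ≤ traceNorm X := by
  have hAXA : IsSelfAdjoint (A * X * A) := by simpa [hA.star_eq] using hX.conjugate' A
  obtain ⟨U, hU, hU', hnorm⟩ := exists_traceNorm_eq_re_trace_mul hAXA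
  have hcycle : (A * X * A * U).trace = (X * (A * U * A)).trace := by
    rw [mul_assoc, mul_assoc, trace_mul_comm, mul_assoc, mul_assoc]
  rw [hnorm, hcycle]
  refine re_trace_mul_le_traceNorm hX ?_ ?_
  · calc A * U * A ≤ A * 1 * A := hA.conjugate_le_conjugate hU
      _ ≤ 1 := by rwa [mul_one]
  · calc -1 ≤ A * (-1) * A := by simpa using neg_le_neg hA1
      _ ≤ A * U * A := hA.conjugate_le_conjugate hU'

lemma IsDensity.le_one {σ : Matrix n n ℂ} (hσ : IsDensity σ) : σ ≤ 1 := by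
  have hH : σ.IsHermitian := hσ.1.1
  refine CFC.le_one (R := ℝ) (fun x hx => ?_) hH.isSelfAdjoint
  obtain ⟨i, rfl⟩ : x ∈ Set.range hH.eigenvalues := hH.spectrum_real_eq_range_eigenvalues ▸ hx
  have htrace : ∑ j, hH.eigenvalues j = 1 := by
    have := hH.trace_eq_sum_eigenvalues
    rw [hσ.2] at this
    simpa using congrArg Complex.re this.symm
  rw [← htrace]
  exact Finset.single_le_sum (fun j _ => hσ.1.eigenvalues_nonneg j) (Finset.mem_univ i)

lemma isDensity_inv_card_smul_one [Nonempty n] :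
    IsDensity ((Fintype.card n : NNReal)⁻¹ • (1 : Matrix n n ℂ)) := by
  refine ⟨PosSemidef.one.smul zero_le, ?_⟩
  rw [trace_smul, trace_one, NNReal.smul_def]
  simp

lemma matSqrt_smul_one (r : NNReal) : matSqrt (r • (1 : Matrix n n ℂ)) = NNReal.sqrt r • 1 := by
  rw [matSqrt_eq_sqrt (PosSemidef.one.smul (a := r) zero_le).nonneg,
    ← Algebra.algebraMap_eq_smul_one, CFC.sqrt_algebraMap, Algebra.algebraMap_eq_smul_one]

variable {p : Type*} [Fintype p] [DecidableEq p]

lemma traceNorm_one_kronecker_matSqrt_mul_mul_le {σ : Matrix n n ℂ} (hσ : IsDensity σ)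
    {X : Matrix (p × n) (p × n) ℂ} (hX : IsSelfAdjoint X) :
    traceNorm ((1 ⊗ₖ matSqrt σ) * X * (1 ⊗ₖ matSqrt σ)) ≤ traceNorm X := by
  rw [matSqrt_eq_sqrt (nonneg_iff_posSemidef.mpr hσ.1)]
  refine traceNorm_mul_mul_le hX ?_ ?_
  · rw [IsSelfAdjoint, star_eq_conjTranspose, conjTranspose_kronecker, conjTranspose_one,
      ← star_eq_conjTranspose, (CFC.sqrt_nonneg σ).isSelfAdjoint.star_eq]
  · rw [← mul_kronecker_mul, one_mul, CFC.sqrt_mul_sqrt_self σ (nonneg_iff_posSemidef.mpr hσ.1)]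
    have h : (1 : Matrix p p ℂ) ⊗ₖ (1 - σ) = 1 - 1 ⊗ₖ σ := by
      ext ⟨i, k⟩ ⟨j, l⟩
      simp only [kroneckerMap_apply, Matrix.sub_apply, one_apply, mul_sub, Prod.mk.injEq]
      split_ifs <;> simp_all
    rw [le_iff, ← h]
    exact PosSemidef.one.kronecker hσ.le_one

lemma traceNorm_one_kronecker_matSqrt_smul_one_mul_mul (r : NNReal) (X : Matrix (p × n) (p × n) ℂ) :
    traceNorm ((1 ⊗ₖ matSqrt (r • (1 : Matrix n n ℂ))) * X * (1 ⊗ₖ matSqrt (r • 1))) =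
      r * traceNorm X := by
  rw [matSqrt_smul_one, kronecker_smul, one_kronecker_one, smul_mul_assoc, one_mul,
    mul_smul_comm, mul_one, smul_smul, NNReal.mul_self_sqrt, traceNorm_smul]

end

/-- For a Hermiticity-preserving linear map `S` from `d×d` to `m×m`
complex matrices (`d ≥ 1`), `‖S‖_ME ≤ ‖S‖_⋄ ≤ d·‖S‖_ME`. -/
theorem stmt0 {d m : ℕ} (hd : 1 ≤ d)
    (S : Matrix (Fin d) (Fin d) ℂ →ₗ[ℂ] Matrix (Fin m) (Fin m) ℂ)
    (hS : (choi S).IsHermitian) :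
    MENorm S ≤ diamondNorm S ∧ diamondNorm S ≤ d * MENorm S := by
  have : Nonempty (Fin d) := ⟨⟨0, hd⟩⟩
  let σ₀ : {σ : Matrix (Fin d) (Fin d) ℂ // IsDensity σ} := ⟨_, isDensity_inv_card_smul_one⟩
  have hbound (σ : {σ : Matrix (Fin d) (Fin d) ℂ // IsDensity σ}) :
      traceNorm ((1 ⊗ₖ matSqrt σ.1) * choi S * (1 ⊗ₖ matSqrt σ.1)) ≤ traceNorm (choi S) :=
    traceNorm_one_kronecker_matSqrt_mul_mul_le σ.2 hS
  constructor
  · calc MENorm S = traceNorm ((1 ⊗ₖ matSqrt σ₀.1) * choi S * (1 ⊗ₖ matSqrt σ₀.1)) := by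
          rw [traceNorm_one_kronecker_matSqrt_smul_one_mul_mul, Fintype.card_fin, MENorm]
          simp [div_eq_inv_mul]
      _ ≤ diamondNorm S := le_ciSup ⟨_, Set.forall_mem_range.mpr hbound⟩ σ₀
  · have : Nonempty {σ : Matrix (Fin d) (Fin d) ℂ // IsDensity σ} := ⟨σ₀⟩
    refine ciSup_le fun σ => (hbound σ).trans_eq ?_
    rw [MENorm, mul_div_cancel₀ _ (by positivity)]
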